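/- Fix p' ∈ (0,1), t ≥ 1 a natural number, and k a multiple of t+1. As w̄ → ∞, the generalized ShBF_M false positive rate f(w̄) = (1-p')^{k/(t+1)} · f_group(w̄)^{k/(t+1)} converges to (1-p')^k, where f_group(w̄) = (1/t)(1-p')²·[(1-p')^t - b(w̄)^t]/[(1-p') - b(w̄)] + p'·b(w̄)^t with b(w̄) = 1 - ((w̄-1-t)/(w̄-1))·p'. -/

import Mathlib

/-!
As `w → ∞` the bit-probability `b(w)` tends to `1 - p'` without ever equalling it, so the
quotient `((1-p')^t - b^t) / ((1-p') - b)` is a difference quotient of `y ↦ y^t` and tends to the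
derivative `t (1-p')^(t-1)`. Hence `f_group → (1-p')^(t+1) + p' (1-p')^t = (1-p')^t`, and the
exponents `k/(t+1)` and `t · k/(t+1)` add up to `k`.
-/

open Filter Topology

lemma tendsto_pow_sub_pow_div_sub (n : ℕ) (x : ℝ) :
    Tendsto (fun y => (x ^ n - y ^ n) / (x - y)) (𝓝[≠] x) (𝓝 (n * x ^ (n - 1))) := by
  have hslope := (hasDerivAt_iff_tendsto_slope.mp (hasDerivAt_pow n x))
  refine hslope.congr fun y => ?_
  rw [slope_def_field, ← neg_div_neg_eq, neg_sub, neg_sub]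

lemma tendsto_sub_div_sub_atTop (a c : ℝ) :
    Tendsto (fun w : ℝ => (w - a) / (w - c)) atTop (𝓝 1) := by
  have hdiff : Tendsto (fun w : ℝ => (c - a) / (w - c)) atTop (𝓝 0) :=
    tendsto_const_nhds.div_atTop (tendsto_atTop_add_const_right _ (-c) tendsto_id)
  have hlim : Tendsto (fun w : ℝ => 1 + (c - a) / (w - c)) atTop (𝓝 1) := by
    simpa using tendsto_const_nhds.add hdiff
  refine hlim.congr' ?_
  filter_upwards [eventually_gt_atTop c] with w hw
  field_simp [sub_ne_zero.mpr hw.ne']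
  ring

lemma tendsto_one_sub_div_mul_nhdsNE (p s : ℝ) (hp : p ≠ 0) (hs : s ≠ 0) :
    Tendsto (fun w : ℝ => 1 - (w - 1 - s) / (w - 1) * p) atTop (𝓝[≠] (1 - p)) := by
  refine tendsto_nhdsWithin_iff.mpr ⟨?_, ?_⟩
  · have hlim := (tendsto_const_nhds (x := (1 : ℝ))).sub
      ((tendsto_sub_div_sub_atTop (1 + s) 1).mul_const p)
    simpa only [sub_sub, one_mul] using hlim
  · filter_upwards [eventually_gt_atTop 1] with w hw
    have hw1 : w - 1 ≠ 0 := sub_ne_zero.mpr hw.ne'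
    have hgap : 1 - (w - 1 - s) / (w - 1) * p - (1 - p) = s * p / (w - 1) := by
      field_simp
      ring
    have : s * p / (w - 1) ≠ 0 := div_ne_zero (mul_ne_zero hs hp) hw1
    exact sub_ne_zero.mp (hgap ▸ this)

lemma tendsto_groupFalsePositive (p : ℝ) {t : ℕ} (ht : t ≠ 0) :
    Tendsto (fun y => 1 / (t : ℝ) * (1 - p) ^ 2 * (((1 - p) ^ t - y ^ t) / ((1 - p) - y)) +
        p * y ^ t) (𝓝[≠] (1 - p)) (𝓝 ((1 - p) ^ t)) := by
  have hlim := ((tendsto_pow_sub_pow_div_sub t (1 - p)).const_mul (1 / (t : ℝ) * (1 - p) ^ 2)).add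
    (((continuous_pow t).tendsto (1 - p)).mono_left nhdsWithin_le_nhds |>.const_mul p)
  convert hlim using 2
  obtain ⟨m, rfl⟩ := Nat.exists_eq_add_one_of_ne_zero ht
  rw [Nat.add_sub_cancel]
  field_simp
  ring

lemma rpow_div_succ_mul_pow_rpow {x : ℝ} (hx : 0 < x) (a : ℝ) (n : ℕ) :
    x ^ (a / (n + 1)) * (x ^ n) ^ (a / (n + 1)) = x ^ a := by
  rw [← Real.rpow_natCast x n, ← Real.rpow_mul hx.le, ← Real.rpow_add hx]
  congr 1
  field_simp
  ring

theorem shbf_gen_fpr_limit_general (p' : ℝ) (hp0 : 0 < p') (hp1 : p' < 1) (t : ℕ)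
    (ht : 1 ≤ t) (k : ℕ) :
    Filter.Tendsto
      (fun w : ℝ =>
        (1 - p') ^ ((k : ℝ) / ((t : ℝ) + 1)) *
          (1 / (t : ℝ) * (1 - p') ^ 2 *
              (((1 - p') ^ t - (1 - (w - 1 - t) / (w - 1) * p') ^ t) /
                ((1 - p') - (1 - (w - 1 - t) / (w - 1) * p'))) +
            p' * (1 - (w - 1 - t) / (w - 1) * p') ^ t) ^ ((k : ℝ) / ((t : ℝ) + 1)))
      Filter.atTop (nhds ((1 - p') ^ (k : ℝ))) := by
  have ht0 : t ≠ 0 := Nat.one_le_iff_ne_zero.mp ht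
  have hq : 0 < 1 - p' := sub_pos.mpr hp1
  have hb := tendsto_one_sub_div_mul_nhdsNE p' t hp0.ne' (Nat.cast_ne_zero.mpr ht0)
  have hgroup := (tendsto_groupFalsePositive p' ht0).comp hb
  have hf := (hgroup.rpow_const (p := (k : ℝ) / ((t : ℝ) + 1))
    (Or.inl (pow_pos hq t).ne')).const_mul ((1 - p') ^ ((k : ℝ) / ((t : ℝ) + 1)))
  rwa [rpow_div_succ_mul_pow_rpow hq] at hf

theorem shbf_gen_fpr_limit (p' : ℝ) (hp0 : 0 < p') (hp1 : p' < 1) (t : ℕ)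
    (ht : 1 ≤ t) (k : ℕ) (hk : ∃ q : ℕ, k = (t + 1) * q) :
    Filter.Tendsto
      (fun w : ℝ =>
        (1 - p') ^ ((k : ℝ) / ((t : ℝ) + 1)) *
          (1 / (t : ℝ) * (1 - p') ^ 2 *
              (((1 - p') ^ t - (1 - (w - 1 - t) / (w - 1) * p') ^ t) /
                ((1 - p') - (1 - (w - 1 - t) / (w - 1) * p'))) +
            p' * (1 - (w - 1 - t) / (w - 1) * p') ^ t) ^ ((k : ℝ) / ((t : ℝ) + 1)))
      Filter.atTop (nhds ((1 - p') ^ (k : ℝ))) :=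
  shbf_gen_fpr_limit_general p' hp0 hp1 t ht k
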